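/- arXiv:1410.6204 — 2 statements merged into one kernel-verified Lean document; each statement's English description precedes it below -/
import Mathlib

section
/- Let S_n be the star graph on n ≥ 1 vertices and let 0 < p < ∞. Then max{n^{1/p}/2, 1} ≤ ‖M_{S_n}‖_{p,∞} ≤ n^{1/p}. In particular, for every finite simple connected graph G with n vertices, ‖M_G‖_{p,∞} ≤ 2·‖M_{S_n}‖_{p,∞}. -/
open scoped Classical
open Finset

noncomputable section

variable {V : Type*} [Fintype V]

/-- metric ball of radius `r` centered at `v` in the graph `G` -/
def gBall (G : SimpleGraph V) (v : V) (r : ℕ) : Finset V :=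
  Finset.univ.filter fun w => G.dist v w ≤ r

/-- Hardy–Littlewood maximal operator on the graph `G` -/
def maxOp (G : SimpleGraph V) (f : V → ℝ) (v : V) : ℝ :=
  ⨆ k : Fin (Fintype.card V), (∑ w ∈ gBall G v k.1, |f w|) / ((gBall G v k.1).card : ℝ)

/-- ℓ^p (quasi)norm of a function on the vertices -/
def pNorm (p : ℝ) (f : V → ℝ) : ℝ := (∑ v, |f v| ^ p) ^ (1 / p)

/-- operator (quasi)norm of the maximal operator of `G` on ℓ^p -/
def opNorm (G : SimpleGraph V) (p : ℝ) : ℝ :=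
  ⨆ f : {f : V → ℝ // f ≠ 0}, pNorm p (maxOp G f.1) / pNorm p f.1

/-- weak ℓ^p norm -/
def wNorm (p : ℝ) (f : V → ℝ) : ℝ :=
  ⨆ t : {t : ℝ // 0 < t},
    t.1 * ((Finset.univ.filter fun v => t.1 < |f v|).card : ℝ) ^ (1 / p)

/-- weak-type operator norm of the maximal operator of `G` -/
def wOpNorm (G : SimpleGraph V) (p : ℝ) : ℝ :=
  ⨆ f : {f : V → ℝ // f ≠ 0}, wNorm p (maxOp G f.1) / pNorm p f.1

/-- maximal operator over all graphs on `V` isomorphic to `G` -/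
def maxOpIso (G : SimpleGraph V) (f : V → ℝ) (j : V) : ℝ :=
  ⨆ H : {H : SimpleGraph V // Nonempty (H ≃g G)}, maxOp H.1 f j

/-- operator norm of `maxOpIso` on ℓ^p -/
def opNormIso (G : SimpleGraph V) (p : ℝ) : ℝ :=
  ⨆ f : {f : V → ℝ // f ≠ 0}, pNorm p (maxOpIso G f.1) / pNorm p f.1

/-- Kronecker delta at `k` -/
def kdelta (k : V) : V → ℝ := fun j => if j = k then 1 else 0

/-- star graph on `Fin n` with center `0` -/
def starGraph (n : ℕ) : SimpleGraph (Fin n) :=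
  SimpleGraph.fromRel fun i _ => i.1 = 0

/-- diameter of a graph -/
def gDiam (G : SimpleGraph V) : ℕ :=
  Finset.univ.sup fun p : V × V => G.dist p.1 p.2

/-- dilation index of a graph -/
def dilIndex (G : SimpleGraph V) : ℝ :=
  ⨆ x : V, ⨆ r : {r : ℕ // r ≤ gDiam G},
    ((gBall G x (3 * r.1)).card : ℝ) / ((gBall G x r.1).card : ℝ)

/-- overlapping index of a graph -/
def overlapIndex (G : SimpleGraph V) : ℕ :=
  sInf { r : ℕ | ∀ J : Finset (V × ℕ), ∃ I ⊆ J,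
    J.biUnion (fun j => gBall G j.1 j.2) = I.biUnion (fun i => gBall G i.1 i.2) ∧
    ∀ v : V, (I.filter fun i => v ∈ gBall G i.1 i.2).card ≤ r }

/-!
Since `M_G f ≤ ‖f‖_∞ ≤ ‖f‖_p` pointwise, every level set of `M_G f` has at most `|V|` points and
level at most `‖f‖_p`, so `‖M_G‖_{p,∞} ≤ |V|^{1/p}`. For the star, the delta at the center has
maximal function `1` at the center and at least `1/2` at every leaf, whose ball of radius one is
{leaf, center}; this gives both lower bounds, and the comparison with an arbitrary graph is
`‖M_G‖_{p,∞} ≤ n^{1/p} ≤ 2 ‖M_{S_n}‖_{p,∞}`.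
-/

lemma mem_gBall_self (G : SimpleGraph V) (v : V) (r : ℕ) : v ∈ gBall G v r := by
  simp [gBall]

lemma gBall_zero {G : SimpleGraph V} (hG : G.Connected) (v : V) : gBall G v 0 = {v} := by
  ext w
  simp [gBall, hG.dist_eq_zero_iff, eq_comm]

lemma mem_gBall_one {G : SimpleGraph V} (hG : G.Connected) {v w : V} :
    w ∈ gBall G v 1 ↔ w = v ∨ G.Adj v w := by
  simp only [gBall, mem_filter, mem_univ, true_and, Nat.le_one_iff_eq_zero_or_eq_one,
    hG.dist_eq_zero_iff, SimpleGraph.dist_eq_one_iff_adj]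
  exact or_congr eq_comm Iff.rfl

section pNorm

variable {p : ℝ}

lemma pNorm_nonneg (p : ℝ) (f : V → ℝ) : 0 ≤ pNorm p f := by
  unfold pNorm
  positivity

lemma abs_le_pNorm (hp : 0 < p) (f : V → ℝ) (w : V) : |f w| ≤ pNorm p f := by
  calc |f w| = (|f w| ^ p) ^ (1 / p) := by rw [one_div, Real.rpow_rpow_inv (abs_nonneg _) hp.ne']
    _ ≤ pNorm p f := by
      unfold pNorm
      gcongr
      exact single_le_sum (f := fun v => |f v| ^ p) (fun v _ => by positivity)
        (mem_univ w)

lemma pNorm_pos (hp : 0 < p) {f : V → ℝ} (hf : f ≠ 0) : 0 < pNorm p f := by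
  obtain ⟨w, hw⟩ := Function.ne_iff.1 hf
  exact (abs_pos.2 hw).trans_le (abs_le_pNorm hp f w)

lemma pNorm_kdelta (hp : p ≠ 0) (u : V) : pNorm p (kdelta u) = 1 := by
  unfold pNorm
  rw [sum_eq_single u (fun v _ hv => by simp [kdelta, hv, Real.zero_rpow hp])
    (by simp)]
  simp [kdelta]

end pNorm

section maxOp

variable (G : SimpleGraph V)

lemma average_le_maxOp (f : V → ℝ) (v : V) {k : ℕ} (hk : k < Fintype.card V) :
    (∑ w ∈ gBall G v k, |f w|) / (gBall G v k).card ≤ maxOp G f v :=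
  le_ciSup (f := fun k : Fin (Fintype.card V) =>
      (∑ w ∈ gBall G v k.1, |f w|) / ((gBall G v k.1).card : ℝ))
    (Set.finite_range _).bddAbove ⟨k, hk⟩

lemma maxOp_nonneg (f : V → ℝ) (v : V) : 0 ≤ maxOp G f v :=
  (by positivity : (0 : ℝ) ≤ _).trans
    (average_le_maxOp G f v (Fintype.card_pos_iff.2 ⟨v⟩) (k := 0))

lemma maxOp_le_pNorm {p : ℝ} (hp : 0 < p) (f : V → ℝ) (v : V) : maxOp G f v ≤ pNorm p f := by
  have : Nonempty (Fin (Fintype.card V)) := ⟨⟨0, Fintype.card_pos_iff.2 ⟨v⟩⟩⟩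
  refine ciSup_le fun k => div_le_of_le_mul₀ (Nat.cast_nonneg _) (pNorm_nonneg p f) ?_
  calc ∑ w ∈ gBall G v k.1, |f w| ≤ ∑ _w ∈ gBall G v k.1, pNorm p f :=
        sum_le_sum fun w _ => abs_le_pNorm hp f w
    _ = pNorm p f * (gBall G v k.1).card := by rw [sum_const, nsmul_eq_mul, mul_comm]

lemma inv_card_gBall_le_maxOp_kdelta {u v : V} {k : ℕ}
    (hu : u ∈ gBall G v k) (hk : k < Fintype.card V) :
    ((gBall G v k).card : ℝ)⁻¹ ≤ maxOp G (kdelta u) v := by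
  have hsum : ∑ w ∈ gBall G v k, |kdelta u w| = 1 := by
    rw [sum_eq_single u (fun w _ hw => by simp [kdelta, hw]) (fun h => (h hu).elim)]
    simp [kdelta]
  simpa [hsum] using average_le_maxOp G (kdelta u) v hk

end maxOp

section wNorm

variable {p : ℝ}

lemma wNorm_term_le (hp : 0 < p) {g : V → ℝ} {M : ℝ} (hM0 : 0 ≤ M) (hM : ∀ v, |g v| ≤ M)
    (t : {t : ℝ // 0 < t}) :
    t.1 * ((univ.filter fun v => t.1 < |g v|).card : ℝ) ^ (1 / p) ≤
      (Fintype.card V : ℝ) ^ (1 / p) * M := by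
  obtain ⟨t, ht⟩ := t
  rcases (univ.filter fun v => t < |g v|).eq_empty_or_nonempty with h | ⟨v, hv⟩
  · rw [h, card_empty, Nat.cast_zero, Real.zero_rpow (by positivity), mul_zero]
    positivity
  · have htM : t ≤ M := (mem_filter.1 hv).2.le.trans (hM v)
    rw [mul_comm]
    gcongr
    exact card_filter_le _ _

lemma bddAbove_wNorm_terms (hp : 0 < p) (g : V → ℝ) :
    BddAbove (Set.range fun t : {t : ℝ // 0 < t} =>
      t.1 * ((univ.filter fun v => t.1 < |g v|).card : ℝ) ^ (1 / p)) :=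
  ⟨_, Set.forall_mem_range.2 <| wNorm_term_le hp (M := ∑ v, |g v|) (by positivity) fun v =>
    single_le_sum (f := fun v => |g v|) (fun _ _ => abs_nonneg _) (mem_univ v)⟩

lemma wNorm_term_le_wNorm (hp : 0 < p) (g : V → ℝ) {t : ℝ} (ht : 0 < t) :
    t * ((univ.filter fun v => t < |g v|).card : ℝ) ^ (1 / p) ≤ wNorm p g :=
  le_ciSup (bddAbove_wNorm_terms hp g) ⟨t, ht⟩

lemma wNorm_le (hp : 0 < p) {g : V → ℝ} {M : ℝ} (hM0 : 0 ≤ M) (hM : ∀ v, |g v| ≤ M) :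
    wNorm p g ≤ (Fintype.card V : ℝ) ^ (1 / p) * M :=
  Real.iSup_le (wNorm_term_le hp hM0 hM) (by positivity)

lemma le_wNorm (hp : 0 < p) {g : V → ℝ} {c : ℝ} (hc : 0 < c) (s : Finset V)
    (hs : ∀ v ∈ s, c ≤ |g v|) : c * (s.card : ℝ) ^ (1 / p) ≤ wNorm p g := by
  refine le_of_forall_lt_imp_le_of_dense fun x hx => ?_
  rcases le_or_gt x 0 with hx0 | hx0
  · exact hx0.trans <| le_trans (by positivity) (wNorm_term_le_wNorm hp g one_pos)
  have hA : 0 < (s.card : ℝ) ^ (1 / p) := pos_of_mul_pos_right (hx0.trans hx) hc.le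
  set t := x / (s.card : ℝ) ^ (1 / p)
  have htc : t < c := (div_lt_iff₀ hA).2 hx
  calc x = t * (s.card : ℝ) ^ (1 / p) := (div_mul_cancel₀ x hA.ne').symm
    _ ≤ t * ((univ.filter fun v => t < |g v|).card : ℝ) ^ (1 / p) := by
      gcongr
      exact fun v hv => mem_filter.2 ⟨mem_univ v, htc.trans_le (hs v hv)⟩
    _ ≤ wNorm p g := wNorm_term_le_wNorm hp g (div_pos hx0 hA)

lemma wNorm_maxOp_le (G : SimpleGraph V) (hp : 0 < p) (f : V → ℝ) :
    wNorm p (maxOp G f) ≤ (Fintype.card V : ℝ) ^ (1 / p) * pNorm p f :=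
  wNorm_le hp (pNorm_nonneg p f) fun v =>
    (abs_of_nonneg (maxOp_nonneg G f v)).trans_le (maxOp_le_pNorm G hp f v)

lemma wOpNorm_le_card_rpow (G : SimpleGraph V) (hp : 0 < p) :
    wOpNorm G p ≤ (Fintype.card V : ℝ) ^ (1 / p) :=
  Real.iSup_le (fun f => (div_le_iff₀ (pNorm_pos hp f.2)).2 (wNorm_maxOp_le G hp f.1))
    (by positivity)

lemma wNorm_maxOp_div_pNorm_le_wOpNorm (G : SimpleGraph V) (hp : 0 < p) {f : V → ℝ}
    (hf : f ≠ 0) : wNorm p (maxOp G f) / pNorm p f ≤ wOpNorm G p :=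
  le_ciSup (f := fun f : {f : V → ℝ // f ≠ 0} => wNorm p (maxOp G f.1) / pNorm p f.1)
    ⟨_, Set.forall_mem_range.2 fun f =>
      (div_le_iff₀ (pNorm_pos hp f.2)).2 (wNorm_maxOp_le G hp f.1)⟩ ⟨f, hf⟩

end wNorm

section starGraph

variable {n : ℕ} [NeZero n]

lemma starGraph_adj {v w : Fin n} : (starGraph n).Adj v w ↔ v ≠ w ∧ (v = 0 ∨ w = 0) := by
  simp only [starGraph, SimpleGraph.fromRel_adj, Fin.ext_iff, Fin.val_zero]

lemma starGraph_connected : (starGraph n).Connected := by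
  have hcenter (w : Fin n) : (starGraph n).Reachable w 0 := by
    rcases eq_or_ne w 0 with rfl | hw
    · rfl
    · exact (starGraph_adj.2 ⟨hw, Or.inr rfl⟩).reachable
  exact (SimpleGraph.connected_iff _).2 ⟨fun u v => (hcenter u).trans (hcenter v).symm, ⟨0⟩⟩

lemma gBall_starGraph_one {v : Fin n} (hv : v ≠ 0) : gBall (starGraph n) v 1 = {v, 0} := by
  ext w
  rw [mem_gBall_one starGraph_connected, starGraph_adj, mem_insert, mem_singleton]
  constructor
  · rintro (h | ⟨-, h | h⟩)
    exacts [Or.inl h, (hv h).elim, Or.inr h]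
  · rintro (rfl | rfl)
    exacts [Or.inl rfl, Or.inr ⟨hv, Or.inr rfl⟩]

lemma one_le_maxOp_starGraph_kdelta_zero : 1 ≤ maxOp (starGraph n) (kdelta 0) 0 := by
  simpa [gBall_zero starGraph_connected] using
    inv_card_gBall_le_maxOp_kdelta (starGraph n) (mem_gBall_self _ 0 0) (by simp [NeZero.pos])

lemma half_le_maxOp_starGraph_kdelta_zero (v : Fin n) :
    1 / 2 ≤ maxOp (starGraph n) (kdelta 0) v := by
  rcases eq_or_ne v 0 with rfl | hv
  · linarith [one_le_maxOp_starGraph_kdelta_zero (n := n)]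
  have hn : 1 < n := lt_of_le_of_lt (Fin.pos_iff_ne_zero.2 hv) v.2
  have h := inv_card_gBall_le_maxOp_kdelta (starGraph n) (u := 0) (v := v) (k := 1)
    (by simp [gBall_starGraph_one hv]) (by simpa using hn)
  rw [gBall_starGraph_one hv, card_pair hv] at h
  simpa using h

end starGraph

/-- weak-type norm of the maximal operator of the star graph, and
the resulting upper bound for arbitrary connected graphs. -/
theorem stmt16 (n : ℕ) (hn : 1 ≤ n) (p : ℝ) (hp : 0 < p) :
    max ((n : ℝ) ^ (1 / p) / 2) 1 ≤ wOpNorm (starGraph n) p ∧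
    wOpNorm (starGraph n) p ≤ (n : ℝ) ^ (1 / p) ∧
    (∀ G : SimpleGraph (Fin n), G.Connected →
      wOpNorm G p ≤ 2 * wOpNorm (starGraph n) p) := by
  have : NeZero n := ⟨by omega⟩
  have hδ : wNorm p (maxOp (starGraph n) (kdelta 0)) ≤ wOpNorm (starGraph n) p := by
    simpa [pNorm_kdelta hp.ne'] using
      wNorm_maxOp_div_pNorm_le_wOpNorm (starGraph n) hp (f := kdelta (0 : Fin n))
        (Function.ne_iff.2 ⟨0, by simp [kdelta]⟩)
  have hhalf : (n : ℝ) ^ (1 / p) / 2 ≤ wNorm p (maxOp (starGraph n) (kdelta 0)) := by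
    have := le_wNorm hp (by norm_num) univ fun (v : Fin n) _ =>
      (half_le_maxOp_starGraph_kdelta_zero v).trans (le_abs_self _)
    simpa [div_eq_inv_mul] using this
  have hone : 1 ≤ wNorm p (maxOp (starGraph n) (kdelta 0)) := by
    simpa using le_wNorm hp one_pos {0} fun v hv => by
      rw [mem_singleton.1 hv]
      exact one_le_maxOp_starGraph_kdelta_zero.trans (le_abs_self _)
  have hupper (G : SimpleGraph (Fin n)) : wOpNorm G p ≤ (n : ℝ) ^ (1 / p) := by
    simpa using wOpNorm_le_card_rpow G hp
  refine ⟨max_le (hhalf.trans hδ) (hone.trans hδ), hupper _, fun G _ => ?_⟩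
  linarith [hupper G, hhalf.trans hδ]

end
end

section
/- (Vitali covering lemma for graphs) Let G be a finite simple connected graph with vertex set V, let A ⊆ V, and let {B_j}_{j∈J} be a finite collection of balls of G (each B_j = B_G(x_j, r_j) for some center x_j ∈ V and radius r_j ∈ ℕ) covering A. Then there exists a subset I ⊆ J such that the balls {B_i}_{i∈I} are pairwise disjoint and |A| ≤ 𝒟(G)·Σ_{i∈I} |B_i|. -/
open scoped Classical
open Finset

noncomputable section

variable {V : Type*} [Fintype V]

/-!
Greedy selection: take a ball of maximal radius, discard every ball meeting it, and recurse.
A discarded ball meets a selected ball of at least its radius, so by the triangle inequality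
it lies in the selected ball dilated by three. Hence `A` is covered by the tripled selected
balls, each of which has at most `dilIndex G` times the size of the original one; for radii
beyond the diameter both balls are all of `V`, and `dilIndex G ≥ 1` from the radius `0`.
-/

lemma mem_gBall {G : SimpleGraph V} {v w : V} {r : ℕ} :
    w ∈ gBall G v r ↔ G.dist v w ≤ r := by
  simp [gBall]

lemma card_gBall_pos (G : SimpleGraph V) (v : V) (r : ℕ) : 0 < (gBall G v r).card :=
  card_pos.mpr ⟨v, mem_gBall_self G v r⟩

lemma dist_le_gDiam (G : SimpleGraph V) (v w : V) : G.dist v w ≤ gDiam G :=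
  le_sup (f := fun p : V × V => G.dist p.1 p.2) (mem_univ (v, w))

lemma gBall_eq_univ_of_gDiam_le {G : SimpleGraph V} (v : V) {r : ℕ} (hr : gDiam G ≤ r) :
    gBall G v r = univ :=
  eq_univ_of_forall fun w => mem_gBall.mpr ((dist_le_gDiam G v w).trans hr)

lemma gBall_subset_gBall_three_mul_of_not_disjoint {G : SimpleGraph V} (hG : G.Connected)
    {u v : V} {s t : ℕ} (h : ¬ Disjoint (gBall G u s) (gBall G v t)) (hst : s ≤ t) :
    gBall G u s ⊆ gBall G v (3 * t) := by
  obtain ⟨y, hyu, hyv⟩ := not_disjoint_iff.mp h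
  intro w hw
  rw [mem_gBall] at hyu hyv hw ⊢
  rw [SimpleGraph.dist_comm] at hyu
  have hvw : G.dist v w ≤ G.dist v y + G.dist y u + G.dist u w :=
    hG.dist_triangle.trans (Nat.add_le_add_right hG.dist_triangle _)
  omega

lemma div_card_gBall_le_dilIndex (G : SimpleGraph V) (v : V) {r : ℕ} (hr : r ≤ gDiam G) :
    ((gBall G v (3 * r)).card : ℝ) / (gBall G v r).card ≤ dilIndex G :=
  le_ciSup_of_le (Set.finite_range _).bddAbove v
    (le_ciSup_of_le (Set.finite_range _).bddAbove ⟨r, hr⟩ le_rfl)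

lemma one_le_dilIndex (G : SimpleGraph V) [Nonempty V] : 1 ≤ dilIndex G := by
  obtain ⟨v⟩ := ‹Nonempty V›
  have hne : ((gBall G v 0).card : ℝ) ≠ 0 := by exact_mod_cast (card_gBall_pos G v 0).ne'
  simpa [div_self hne] using div_card_gBall_le_dilIndex G v (Nat.zero_le _)

lemma card_gBall_three_mul_le (G : SimpleGraph V) (v : V) (r : ℕ) :
    ((gBall G v (3 * r)).card : ℝ) ≤ dilIndex G * (gBall G v r).card := by
  rcases le_total r (gDiam G) with hr | hr
  · rw [← div_le_iff₀ (by exact_mod_cast card_gBall_pos G v r)]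
    exact div_card_gBall_le_dilIndex G v hr
  · have : Nonempty V := ⟨v⟩
    rw [gBall_eq_univ_of_gDiam_le v hr, gBall_eq_univ_of_gDiam_le v (hr.trans (by omega))]
    exact le_mul_of_one_le_left (by positivity) (one_le_dilIndex G)

theorem exists_pairwiseDisjoint_subset_forall_subset_gBall_three_mul {G : SimpleGraph V}
    (hG : G.Connected) {ι : Type*} (x : ι → V) (r : ι → ℕ) (J : Finset ι) :
    ∃ I ⊆ J, (I : Set ι).PairwiseDisjoint (fun i => gBall G (x i) (r i)) ∧
      ∀ k ∈ J, ∃ i ∈ I, gBall G (x k) (r k) ⊆ gBall G (x i) (3 * r i) := by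
  induction J using Finset.strongInduction with
  | H J ih =>
    rcases J.eq_empty_or_nonempty with rfl | hne
    · exact ⟨∅, empty_subset _, by simp, by simp⟩
    obtain ⟨j, hjJ, hjmax⟩ := J.exists_max_image r hne
    set J' := J.filter fun k => Disjoint (gBall G (x k) (r k)) (gBall G (x j) (r j))
    have hjj : ¬ Disjoint (gBall G (x j) (r j)) (gBall G (x j) (r j)) :=
      not_disjoint_iff.mpr ⟨x j, mem_gBall_self G _ _, mem_gBall_self G _ _⟩
    obtain ⟨I', hI'J', hdisj, hcov⟩ := ih J' (filter_ssubset.mpr ⟨j, hjJ, hjj⟩)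
    refine ⟨insert j I', insert_subset hjJ (hI'J'.trans (filter_subset _ _)), ?_, ?_⟩
    · rw [coe_insert]
      exact hdisj.insert fun i hi _ => ((mem_filter.mp (hI'J' hi)).2).symm
    · intro k hk
      by_cases hkj : Disjoint (gBall G (x k) (r k)) (gBall G (x j) (r j))
      · obtain ⟨i, hi, hki⟩ := hcov k (mem_filter.mpr ⟨hk, hkj⟩)
        exact ⟨i, mem_insert_of_mem hi, hki⟩
      · exact ⟨j, mem_insert_self _ _,
          gBall_subset_gBall_three_mul_of_not_disjoint hG hkj (hjmax k hk)⟩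

/-- Vitali covering lemma for graphs. -/
theorem stmt17 {V : Type*} [Fintype V] {ι : Type*} (G : SimpleGraph V)
    (hG : G.Connected) (A : Finset V) (J : Finset ι) (x : ι → V) (r : ι → ℕ)
    (hcov : ∀ a ∈ A, ∃ j ∈ J, a ∈ gBall G (x j) (r j)) :
    ∃ I ⊆ J,
      (∀ i ∈ I, ∀ k ∈ I, i ≠ k → Disjoint (gBall G (x i) (r i)) (gBall G (x k) (r k))) ∧
      (A.card : ℝ) ≤ dilIndex G * ∑ i ∈ I, ((gBall G (x i) (r i)).card : ℝ) := by
  obtain ⟨I, hIJ, hdisj, hsub⟩ :=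
    exists_pairwiseDisjoint_subset_forall_subset_gBall_three_mul hG x r J
  refine ⟨I, hIJ, fun i hi k hk hik => hdisj hi hk hik, ?_⟩
  have hA : A ⊆ I.biUnion fun i => gBall G (x i) (3 * r i) := by
    intro a ha
    obtain ⟨j, hj, haj⟩ := hcov a ha
    obtain ⟨i, hi, hji⟩ := hsub j hj
    exact mem_biUnion.mpr ⟨i, hi, hji haj⟩
  calc (A.card : ℝ) ≤ (I.biUnion fun i => gBall G (x i) (3 * r i)).card := by
        exact_mod_cast card_le_card hA
    _ ≤ ∑ i ∈ I, ((gBall G (x i) (3 * r i)).card : ℝ) := by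
        exact_mod_cast card_biUnion_le
    _ ≤ ∑ i ∈ I, dilIndex G * (gBall G (x i) (r i)).card :=
        sum_le_sum fun i _ => card_gBall_three_mul_le G (x i) (r i)
    _ = dilIndex G * ∑ i ∈ I, ((gBall G (x i) (r i)).card : ℝ) := (mul_sum ..).symm
end
end
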